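/- arXiv:1707.05846 — 3 statements merged into one kernel-verified Lean document; each statement's English description precedes it below -/
import Mathlib

section
/- Let (yₙ) be defined by y₀ = 1 and y_{n+1} = yₙ² + 1 for all n ≥ 0, and let k = exp(∑_{n=0}^{∞} 2^{-(n+1)} · log(1 + yₙ^{-2})). Then for every n ≥ 0, yₙ = ⌊k^{2ⁿ}⌋. -/
/-!
Write `a n = log yₙ / 2ⁿ` and `b n = log (yₙ + 1) / 2ⁿ`. Since `yₙ₊₁ = yₙ² (1 + yₙ⁻²)`, the
increments of `a` are exactly the terms of the series defining `log k`, so `a` increases to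
`log k`; since `yₙ₊₁ + 1 < (yₙ + 1)²`, `b` strictly decreases, and `a ≤ b`. Hence
`a n ≤ log k < b n`, i.e. `yₙ ≤ k^(2ⁿ) < yₙ + 1`.
-/

open Real Filter Topology

namespace AhoSloane

noncomputable def scaledLog (y : ℕ → ℝ) (n : ℕ) : ℝ := log (y n) / 2 ^ n

lemma scaledLog_succ (y : ℕ → ℝ) (n : ℕ) :
    scaledLog y (n + 1) = scaledLog y n + (log (y (n + 1)) - 2 * log (y n)) / 2 ^ (n + 1) := by
  unfold scaledLog
  field_simp
  ring

lemma log_sq_add_one {x : ℝ} (hx : x ≠ 0) :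
    log (x ^ 2 + 1) = 2 * log x + log (1 + (x ^ 2)⁻¹) := by
  rw [show x ^ 2 + 1 = x ^ 2 * (1 + (x ^ 2)⁻¹) by field_simp,
    log_mul (by positivity) (by positivity), log_pow]
  push_cast
  ring

variable {y : ℕ → ℝ}

lemma one_le_of_sq_add_one (h0 : 1 ≤ y 0) (hrec : ∀ n, y (n + 1) = y n ^ 2 + 1) (n : ℕ) :
    1 ≤ y n := by
  cases n with
  | zero => exact h0
  | succ n => rw [hrec]; nlinarith [sq_nonneg (y n)]

lemma pos_of_sq_add_one (h0 : 1 ≤ y 0) (hrec : ∀ n, y (n + 1) = y n ^ 2 + 1) (n : ℕ) :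
    0 < y n :=
  zero_lt_one.trans_le (one_le_of_sq_add_one h0 hrec n)

lemma scaledLog_succ_sub (hrec : ∀ n, y (n + 1) = y n ^ 2 + 1) {n : ℕ} (hn : y n ≠ 0) :
    scaledLog y (n + 1) - scaledLog y n = ((2 : ℝ) ^ (n + 1))⁻¹ * log (1 + (y n ^ 2)⁻¹) := by
  rw [scaledLog_succ, hrec, log_sq_add_one hn]
  ring

lemma log_one_add_inv_sq_nonneg (x : ℝ) : 0 ≤ log (1 + (x ^ 2)⁻¹) :=
  log_nonneg (le_add_of_nonneg_right (by positivity))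

lemma monotone_scaledLog (hrec : ∀ n, y (n + 1) = y n ^ 2 + 1) (hy : ∀ n, y n ≠ 0) :
    Monotone (scaledLog y) :=
  monotone_nat_of_le_succ fun n => sub_nonneg.1 <| by
    rw [scaledLog_succ_sub hrec (hy n)]
    exact mul_nonneg (by positivity) (log_one_add_inv_sq_nonneg _)

lemma strictAnti_scaledLog_add_one (hrec : ∀ n, y (n + 1) = y n ^ 2 + 1) (hy : ∀ n, 1 ≤ y n) :
    StrictAnti (scaledLog (y · + 1)) :=
  strictAnti_nat_of_succ_lt fun n => by
    have hlog : log (y (n + 1) + 1) < 2 * log (y n + 1) := by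
      rw [show 2 * log (y n + 1) = log ((y n + 1) ^ 2) by rw [log_pow]; push_cast; ring]
      apply log_lt_log (by linarith [hy (n + 1)])
      rw [hrec]
      nlinarith [hy n]
    rw [scaledLog_succ, add_lt_iff_neg_left]
    exact div_neg_of_neg_of_pos (by linarith) (by positivity)

lemma scaledLog_le_scaledLog_add_one (h0 : 1 ≤ y 0) (hrec : ∀ n, y (n + 1) = y n ^ 2 + 1)
    (m n : ℕ) : scaledLog y m ≤ scaledLog (y · + 1) n := by
  have hpos := pos_of_sq_add_one h0 hrec
  calc scaledLog y m ≤ scaledLog y (max m n) :=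
        monotone_scaledLog hrec (fun i => (hpos i).ne') (le_max_left m n)
    _ ≤ scaledLog (y · + 1) (max m n) :=
        div_le_div_of_nonneg_right (log_le_log (hpos _) (by linarith)) (by positivity)
    _ ≤ scaledLog (y · + 1) n :=
        (strictAnti_scaledLog_add_one hrec (one_le_of_sq_add_one h0 hrec)).antitone
          (le_max_right m n)

lemma bddAbove_range_scaledLog (h0 : 1 ≤ y 0) (hrec : ∀ n, y (n + 1) = y n ^ 2 + 1) :
    BddAbove (Set.range (scaledLog y)) :=
  ⟨_, Set.forall_mem_range.2 fun m => scaledLog_le_scaledLog_add_one h0 hrec m 0⟩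

lemma tendsto_scaledLog (h0 : 1 ≤ y 0) (hrec : ∀ n, y (n + 1) = y n ^ 2 + 1) :
    Tendsto (scaledLog y) atTop (𝓝 (⨆ n, scaledLog y n)) :=
  tendsto_atTop_ciSup (monotone_scaledLog hrec fun n => (pos_of_sq_add_one h0 hrec n).ne')
    (bddAbove_range_scaledLog h0 hrec)

lemma scaledLog_le_iSup_lt (h0 : 1 ≤ y 0) (hrec : ∀ n, y (n + 1) = y n ^ 2 + 1) (n : ℕ) :
    scaledLog y n ≤ ⨆ m, scaledLog y m ∧ (⨆ m, scaledLog y m) < scaledLog (y · + 1) n :=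
  ⟨le_ciSup (bddAbove_range_scaledLog h0 hrec) n,
    (ciSup_le fun m => scaledLog_le_scaledLog_add_one h0 hrec m (n + 1)).trans_lt
      (strictAnti_scaledLog_add_one hrec (one_le_of_sq_add_one h0 hrec) n.lt_succ_self)⟩

lemma le_exp_iSup_scaledLog_lt (h0 : 1 ≤ y 0) (hrec : ∀ n, y (n + 1) = y n ^ 2 + 1) (n : ℕ) :
    y n ≤ exp (2 ^ n * ⨆ m, scaledLog y m) ∧ exp (2 ^ n * ⨆ m, scaledLog y m) < y n + 1 := by
  have hpos := pos_of_sq_add_one h0 hrec n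
  obtain ⟨hlo, hhi⟩ := scaledLog_le_iSup_lt h0 hrec n
  unfold scaledLog at hlo hhi
  rw [div_le_iff₀' (by positivity)] at hlo
  rw [lt_div_iff₀' (by positivity)] at hhi
  exact ⟨(log_le_iff_le_exp hpos).1 hlo, (lt_log_iff_exp_lt (by linarith)).1 hhi⟩

lemma hasSum_log_one_add_inv_sq (h0 : 1 ≤ y 0) (hrec : ∀ n, y (n + 1) = y n ^ 2 + 1) :
    HasSum (fun n => ((2 : ℝ) ^ (n + 1))⁻¹ * log (1 + (y n ^ 2)⁻¹))
      ((⨆ n, scaledLog y n) - log (y 0)) := by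
  rw [hasSum_iff_tendsto_nat_of_nonneg
    (fun n => mul_nonneg (by positivity) (log_one_add_inv_sq_nonneg _))]
  simp_rw [fun n => (scaledLog_succ_sub hrec (pos_of_sq_add_one h0 hrec n).ne').symm,
    Finset.sum_range_sub]
  simpa [scaledLog] using (tendsto_scaledLog h0 hrec).sub_const (scaledLog y 0)

end AhoSloane

open AhoSloane in
/-- Aho–Sloane: with `y₀ = 1`, `y_{n+1} = yₙ² + 1` and
`k = exp(∑_{n=0}^{∞} 2^{-(n+1)} · log(1 + yₙ^{-2}))`, one has `yₙ = ⌊k^{2ⁿ}⌋` for all `n`. -/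
theorem aho_sloane_floor_formula (y : ℕ → ℕ)
    (h0 : y 0 = 1) (hrec : ∀ n, y (n + 1) = (y n) ^ 2 + 1)
    (k : ℝ)
    (hk : k = Real.exp (∑' n : ℕ, ((2 : ℝ) ^ (n + 1))⁻¹ * Real.log (1 + ((y n : ℝ) ^ 2)⁻¹))) :
    ∀ n : ℕ, (y n : ℤ) = ⌊k ^ (2 ^ n)⌋ := by
  intro n
  set Y : ℕ → ℝ := fun n => y n
  have hY0 : Y 0 = 1 := by simp [Y, h0]
  have hYrec : ∀ n, Y (n + 1) = Y n ^ 2 + 1 := fun n => by simp [Y, hrec]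
  have hkL : k = exp (⨆ m, scaledLog Y m) := by
    rw [hk, (hasSum_log_one_add_inv_sq hY0.ge hYrec).tsum_eq, hY0, log_one, sub_zero]
  rw [eq_comm, Int.floor_eq_iff, hkL, ← exp_nat_mul]
  push_cast
  exact le_exp_iSup_scaledLog_lt hY0.ge hYrec n
end

section
/- Let (yₙ) be defined by y₀ = 1 and y_{n+1} = yₙ² + 1 for all n ≥ 0, and let k = exp(∑_{n=0}^{∞} 2^{-(n+1)} · log(1 + yₙ^{-2})). Then 1.5028 < k < 1.5029. -/
/-!
Since `1 + yₙ⁻² = yₙ₊₁ / yₙ²`, the series telescopes: its first `N` terms sum to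
`2⁻ᴺ log y_N` (as `y₀ = 1`), so `k ^ 2ᴺ = y_N · exp t` where `2ᴺ` times the tail gives
`0 ≤ t ≤ y_N⁻²`. For `N = 4` this reads `677 ≤ k ^ 16 ≤ 677 · exp (1 / 677²)`, and the
bounds on `k` follow from rational arithmetic.
-/

open Finset Real

lemma Real.log_one_add_inv_sq {x : ℝ} (hx : x ≠ 0) :
    log (1 + (x ^ 2)⁻¹) = log (x ^ 2 + 1) - 2 * log x := by
  have hx2 : x ^ 2 ≠ 0 := pow_ne_zero 2 hx
  rw [show 2 * log x = log (x ^ 2) by simp [log_pow], ← log_div (by positivity) hx2]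
  field_simp

lemma Real.log_one_add_inv_sq_nonneg (x : ℝ) : 0 ≤ log (1 + (x ^ 2)⁻¹) :=
  log_nonneg (le_add_of_nonneg_right (by positivity))

lemma Real.log_one_add_inv_sq_le_of_le {a b : ℝ} (ha : 0 < a) (hab : a ≤ b) :
    log (1 + (b ^ 2)⁻¹) ≤ (a ^ 2)⁻¹ := by
  have hb2 : (b ^ 2)⁻¹ ≤ (a ^ 2)⁻¹ := inv_anti₀ (by positivity) (by gcongr)
  linarith [log_le_sub_one_of_pos (x := 1 + (b ^ 2)⁻¹) (by positivity)]

lemma sum_range_inv_two_pow_succ_mul_sub (a : ℕ → ℝ) (N : ℕ) :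
    ∑ n ∈ range N, ((2 : ℝ) ^ (n + 1))⁻¹ * (a (n + 1) - 2 * a n)
      = ((2 : ℝ) ^ N)⁻¹ * a N - a 0 := by
  have hterm : ∀ n, ((2 : ℝ) ^ (n + 1))⁻¹ * (a (n + 1) - 2 * a n)
      = ((2 : ℝ) ^ (n + 1))⁻¹ * a (n + 1) - ((2 : ℝ) ^ n)⁻¹ * a n := by
    intro n
    rw [pow_succ]
    field_simp
  simp_rw [hterm]
  simpa using sum_range_sub (fun n ↦ ((2 : ℝ) ^ n)⁻¹ * a n) N

section HalfPowerSeries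

variable {c : ℕ → ℝ} {C : ℝ}

lemma inv_two_pow_succ_mul_le (hC : ∀ n, c n ≤ C) (n : ℕ) :
    ((2 : ℝ) ^ (n + 1))⁻¹ * c n ≤ C / 2 / 2 ^ n := by
  rw [div_div, ← pow_succ', div_eq_inv_mul]
  exact mul_le_mul_of_nonneg_left (hC n) (by positivity)

lemma summable_inv_two_pow_succ_mul (hc : ∀ n, 0 ≤ c n) (hC : ∀ n, c n ≤ C) :
    Summable fun n ↦ ((2 : ℝ) ^ (n + 1))⁻¹ * c n :=
  (summable_geometric_two' C).of_nonneg_of_le (fun n ↦ mul_nonneg (by positivity) (hc n))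
    (inv_two_pow_succ_mul_le hC)

lemma tsum_inv_two_pow_succ_mul_le (hc : ∀ n, 0 ≤ c n) (hC : ∀ n, c n ≤ C) :
    ∑' n, ((2 : ℝ) ^ (n + 1))⁻¹ * c n ≤ C :=
  (tsum_geometric_two' C) ▸ (summable_inv_two_pow_succ_mul hc hC).tsum_le_tsum
    (inv_two_pow_succ_mul_le hC) (summable_geometric_two' C)

end HalfPowerSeries

section AhoSloane

variable {y : ℕ → ℕ} (hrec : ∀ n, y (n + 1) = y n ^ 2 + 1)
include hrec

lemma monotone_of_succ_eq_sq_add_one : Monotone y :=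
  monotone_nat_of_le_succ fun n ↦ by rw [hrec]; nlinarith

lemma log_one_add_inv_sq_of_succ_eq_sq_add_one {n : ℕ} (hy : y n ≠ 0) :
    log (1 + ((y n : ℝ) ^ 2)⁻¹) = log (y (n + 1)) - 2 * log (y n) := by
  rw [hrec, Real.log_one_add_inv_sq (by exact_mod_cast hy)]
  push_cast
  rfl

theorem exists_exp_tsum_pow_two_pow_eq_mul_exp (h0 : y 0 = 1) (N : ℕ) :
    ∃ t, 0 ≤ t ∧ t ≤ ((y N : ℝ) ^ 2)⁻¹ ∧
      exp (∑' n : ℕ, ((2 : ℝ) ^ (n + 1))⁻¹ * log (1 + ((y n : ℝ) ^ 2)⁻¹)) ^ 2 ^ N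
        = y N * exp t := by
  have hmono := monotone_of_succ_eq_sq_add_one hrec
  have hpos : ∀ n, 0 < y n := fun n ↦ (h0 ▸ Nat.one_pos).trans_le (hmono (Nat.zero_le n))
  set f : ℕ → ℝ := fun n ↦ ((2 : ℝ) ^ (n + 1))⁻¹ * log (1 + ((y n : ℝ) ^ 2)⁻¹)
  set c : ℕ → ℝ := fun n ↦ log (1 + ((y (n + N) : ℝ) ^ 2)⁻¹)
  have hc : ∀ n, 0 ≤ c n := fun n ↦ Real.log_one_add_inv_sq_nonneg _
  have hcle : ∀ n, c n ≤ ((y N : ℝ) ^ 2)⁻¹ := fun n ↦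
    Real.log_one_add_inv_sq_le_of_le (by exact_mod_cast hpos N)
      (by exact_mod_cast hmono (Nat.le_add_left N n))
  have htail : ∀ n, f (n + N) = ((2 : ℝ) ^ N)⁻¹ * (((2 : ℝ) ^ (n + 1))⁻¹ * c n) := by
    intro n
    simp only [f, c, ← mul_assoc, ← mul_inv, ← pow_add]
    ring_nf
  have hsum : Summable f := by
    rw [← summable_nat_add_iff N, funext htail]
    exact (summable_inv_two_pow_succ_mul hc hcle).mul_left _
  have hhead : ∑ n ∈ range N, f n = ((2 : ℝ) ^ N)⁻¹ * log (y N) := by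
    have := sum_range_inv_two_pow_succ_mul_sub (fun n ↦ log (y n)) N
    simp only [h0, Nat.cast_one, log_one, sub_zero] at this
    rw [← this]
    exact sum_congr rfl fun n _ ↦ by
      simp only [f, log_one_add_inv_sq_of_succ_eq_sq_add_one hrec (hpos n).ne']
  refine ⟨_, tsum_nonneg fun n ↦ mul_nonneg (by positivity) (hc n),
    tsum_inv_two_pow_succ_mul_le hc hcle, ?_⟩
  rw [← hsum.sum_add_tsum_nat_add N, hhead, funext htail, tsum_mul_left, ← mul_add,
    ← exp_nat_mul, Nat.cast_pow, Nat.cast_ofNat, mul_inv_cancel_left₀ (by positivity), exp_add,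
    exp_log (by exact_mod_cast hpos N)]

end AhoSloane

/-- With `y₀ = 1`, `y_{n+1} = yₙ² + 1` and
`k = exp(∑_{n=0}^{∞} 2^{-(n+1)} · log(1 + yₙ^{-2}))`, one has `1.5028 < k < 1.5029`. -/
theorem aho_sloane_constant_bounds (y : ℕ → ℕ)
    (h0 : y 0 = 1) (hrec : ∀ n, y (n + 1) = (y n) ^ 2 + 1)
    (k : ℝ)
    (hk : k = Real.exp (∑' n : ℕ, ((2 : ℝ) ^ (n + 1))⁻¹ * Real.log (1 + ((y n : ℝ) ^ 2)⁻¹))) :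
    1.5028 < k ∧ k < 1.5029 := by
  have hy4 : y 4 = 677 := by simp [hrec, h0]
  obtain ⟨t, ht0, ht, hk16⟩ := exists_exp_tsum_pow_two_pow_eq_mul_exp hrec h0 4
  rw [← hk, hy4] at hk16
  rw [hy4] at ht
  norm_num at hk16 ht
  have hexp : exp t < 1 / (1 - 1 / 458329) := (exp_le_exp.mpr ht).trans_lt
    (exp_bound_div_one_sub_of_interval' (by norm_num) (by norm_num))
  constructor
  · refine lt_of_pow_lt_pow_left₀ 16 (hk ▸ (exp_pos _).le) ?_
    rw [hk16]
    nlinarith [one_le_exp ht0]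
  · refine lt_of_pow_lt_pow_left₀ 16 (by norm_num) ?_
    rw [hk16]
    nlinarith
end

section
/- Let (yₙ) be defined by y₀ = 1 and y_{n+1} = yₙ² + 1 for all n ≥ 0, and let k = exp(∑_{n=0}^{∞} 2^{-(n+1)} · log(1 + yₙ^{-2})). Then the sequence 2ⁿ / log₂(yₙ) (defined for n ≥ 1) converges to log 2 / log k as n → ∞, and this limit L satisfies 1.7015 < L < 1.7016. -/
/-!
Since `y (n + 1) = y n ^ 2 * (1 + (y n ^ 2)⁻¹)`, the normalised logarithms satisfy
`log y (n + 1) / 2 ^ (n + 1) = log y n / 2 ^ n + 2 ^ -(n + 1) * log (1 + y n ^ -2)`, so with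
`y 0 = 1` they are exactly the partial sums of the series defining `log k`, and
`2 ^ n / log₂ y n = log 2 / (log y n / 2 ^ n) → log 2 / log k`. For the numerical bounds the first
four terms are evaluated with the series `log (1 + a⁻¹) = 2 artanh (1 / (2a + 1))`, and the tail is
below `2⁻⁴ · 677⁻²` because `y n ≥ y 4 = 677` from `n = 4` on.
-/

open Filter

open Finset Real

noncomputable def logCorrection (y : ℕ → ℝ) (n : ℕ) : ℝ :=
  ((2 : ℝ) ^ (n + 1))⁻¹ * log (1 + (y n ^ 2)⁻¹)

section Recurrence

variable {y : ℕ → ℝ}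

lemma monotone_of_sq_add_one (hrec : ∀ n, y (n + 1) = y n ^ 2 + 1) : Monotone y :=
  monotone_nat_of_le_succ fun n => by rw [hrec]; nlinarith [sq_nonneg (y n - 1)]

lemma log_div_two_pow_eq_add_sum_logCorrection (hrec : ∀ n, y (n + 1) = y n ^ 2 + 1)
    (hy : ∀ n, y n ≠ 0) (n : ℕ) :
    log (y n) / 2 ^ n = log (y 0) + ∑ m ∈ range n, logCorrection y m := by
  induction n with
  | zero => simp
  | succ n ih =>
    have hlog : log (y (n + 1)) = 2 * log (y n) + log (1 + (y n ^ 2)⁻¹) := by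
      have hsq : y n ^ 2 ≠ 0 := pow_ne_zero 2 (hy n)
      calc log (y (n + 1)) = log (y n ^ 2 * (1 + (y n ^ 2)⁻¹)) := by
            rw [hrec, mul_add, mul_one, mul_inv_cancel₀ hsq]
        _ = 2 * log (y n) + log (1 + (y n ^ 2)⁻¹) := by
            rw [log_mul hsq (by positivity), log_pow, Nat.cast_ofNat]
    rw [sum_range_succ, ← add_assoc, ← ih, hlog, logCorrection]
    field_simp
    ring

end Recurrence

lemma logCorrection_nonneg (y : ℕ → ℝ) (n : ℕ) : 0 ≤ logCorrection y n :=
  mul_nonneg (by positivity) (log_nonneg (by simp; positivity))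

section Tail

variable {y : ℕ → ℝ} {c : ℝ}

lemma logCorrection_le_of_le (hc : 0 < c) {n : ℕ} (hn : c ≤ y n) :
    logCorrection y n ≤ ((2 : ℝ) ^ (n + 1))⁻¹ * (c ^ 2)⁻¹ := by
  have hlog : log (1 + (y n ^ 2)⁻¹) ≤ (y n ^ 2)⁻¹ := by
    linarith [log_le_sub_one_of_pos (by positivity : (0 : ℝ) < 1 + (y n ^ 2)⁻¹)]
  have hinv : (y n ^ 2)⁻¹ ≤ (c ^ 2)⁻¹ := by gcongr
  exact mul_le_mul_of_nonneg_left (hlog.trans hinv) (by positivity)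

lemma logCorrection_nat_add_le_geometric (hc : 0 < c) {N n : ℕ} (h : c ≤ y (n + N)) :
    logCorrection y (n + N) ≤ ((2 : ℝ) ^ N)⁻¹ * (c ^ 2)⁻¹ / 2 * (1 / 2) ^ n :=
  (logCorrection_le_of_le hc h).trans_eq (by rw [one_div, inv_pow, pow_succ, pow_add]; ring)

lemma summable_logCorrection_nat_add (hc : 0 < c) {N : ℕ} (hy : ∀ n, c ≤ y (n + N)) :
    Summable fun n => logCorrection y (n + N) :=
  .of_nonneg_of_le (fun _ => logCorrection_nonneg y _)
    (fun n => logCorrection_nat_add_le_geometric hc (hy n)) (summable_geometric_two.mul_left _)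

lemma tsum_logCorrection_nat_add_le (hc : 0 < c) {N : ℕ} (hy : ∀ n, c ≤ y (n + N)) :
    ∑' n, logCorrection y (n + N) ≤ ((2 : ℝ) ^ N)⁻¹ * (c ^ 2)⁻¹ := by
  calc ∑' n, logCorrection y (n + N)
      ≤ ∑' n : ℕ, ((2 : ℝ) ^ N)⁻¹ * (c ^ 2)⁻¹ / 2 * (1 / 2) ^ n :=
        (summable_logCorrection_nat_add hc hy).tsum_le_tsum
          (fun n => logCorrection_nat_add_le_geometric hc (hy n)) (summable_geometric_two.mul_left _)
    _ = ((2 : ℝ) ^ N)⁻¹ * (c ^ 2)⁻¹ := by rw [tsum_mul_left, tsum_geometric_two]; ring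

lemma summable_logCorrection (hc : 0 < c) (hy : ∀ n, c ≤ y n) : Summable (logCorrection y) :=
  summable_logCorrection_nat_add (N := 0) hc hy

end Tail

lemma tendsto_log_div_two_pow {y : ℕ → ℝ} (hrec : ∀ n, y (n + 1) = y n ^ 2 + 1) (h0 : 0 < y 0) :
    Tendsto (fun n => log (y n) / 2 ^ n) atTop (nhds (log (y 0) + ∑' n, logCorrection y n)) := by
  have hy : ∀ n, y 0 ≤ y n := fun n => monotone_of_sq_add_one hrec (Nat.zero_le n)
  simp_rw [log_div_two_pow_eq_add_sum_logCorrection hrec fun n => (h0.trans_le (hy n)).ne']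
  exact ((summable_logCorrection h0 hy).hasSum.tendsto_sum_nat).const_add _

section LogBounds

variable {a : ℝ}

lemma one_add_inv_eq_div (ha : 0 < a) :
    1 + a⁻¹ = (1 + 1 / (2 * a + 1)) / (1 - 1 / (2 * a + 1)) := by
  field_simp
  ring

lemma two_mul_sum_range_le_log_one_add_inv (ha : 0 < a) (n : ℕ) :
    2 * ∑ i ∈ range n, (1 / (2 * a + 1)) ^ (2 * i + 1) / (2 * i + 1) ≤ log (1 + a⁻¹) := by
  have h := sum_range_le_log_div (x := 1 / (2 * a + 1)) (by positivity)
    ((div_lt_one (by positivity)).mpr (by linarith)) n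
  rw [← one_add_inv_eq_div ha] at h
  linarith

lemma log_one_add_inv_le_two_mul_sum_range_add (ha : 0 < a) (n : ℕ) :
    log (1 + a⁻¹) ≤ 2 * (∑ i ∈ range n, (1 / (2 * a + 1)) ^ (2 * i + 1) / (2 * i + 1) +
      (1 / (2 * a + 1)) ^ (2 * n + 1) / (1 - (1 / (2 * a + 1)) ^ 2)) := by
  have h := log_div_le_sum_range_add (x := 1 / (2 * a + 1)) (by positivity)
    ((div_lt_one (by positivity)).mpr (by linarith)) n
  rw [← one_add_inv_eq_div ha] at h
  linarith

end LogBounds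

lemma tsum_logCorrection_mem_Ioo {y : ℕ → ℝ} (h0 : y 0 = 1)
    (hrec : ∀ n, y (n + 1) = y n ^ 2 + 1) :
    0.407351 < ∑' n, logCorrection y n ∧ ∑' n, logCorrection y n < 0.407373 := by
  have hy1 : y 1 = 2 := by rw [hrec, h0]; norm_num
  have hy2 : y 2 = 5 := by rw [hrec, hy1]; norm_num
  have hy3 : y 3 = 26 := by rw [hrec, hy2]; norm_num
  have hy4 : y 4 = 677 := by rw [hrec, hy3]; norm_num
  have hmono := monotone_of_sq_add_one hrec
  have hsplit := (summable_logCorrection one_pos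
    fun n => h0 ▸ hmono (Nat.zero_le n)).sum_add_tsum_nat_add 4
  have htail_nonneg : 0 ≤ ∑' n, logCorrection y (n + 4) :=
    tsum_nonneg fun _ => logCorrection_nonneg y _
  have htail_le := tsum_logCorrection_nat_add_le (c := 677) (N := 4) (by norm_num)
    fun n => hy4 ▸ hmono (Nat.le_add_left 4 n)
  have l1 := two_mul_sum_range_le_log_one_add_inv (a := 2 ^ 2) (by norm_num) 3
  have u1 := log_one_add_inv_le_two_mul_sum_range_add (a := 2 ^ 2) (by norm_num) 3
  have l2 := two_mul_sum_range_le_log_one_add_inv (a := 5 ^ 2) (by norm_num) 2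
  have u2 := log_one_add_inv_le_two_mul_sum_range_add (a := 5 ^ 2) (by norm_num) 2
  have l3 := two_mul_sum_range_le_log_one_add_inv (a := 26 ^ 2) (by norm_num) 1
  have u3 := log_one_add_inv_le_two_mul_sum_range_add (a := 26 ^ 2) (by norm_num) 1
  rw [← hsplit]
  set tail := ∑' n, logCorrection y (n + 4)
  simp only [sum_range_succ, sum_range_zero, logCorrection, h0, hy1, hy2, hy3] at l1 u1 l2 u2 l3 u3 ⊢
  norm_num at l1 u1 l2 u2 l3 u3 htail_le ⊢
  constructor <;> linarith [log_two_gt_d9, log_two_lt_d9]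

/-- With `y₀ = 1`, `y_{n+1} = yₙ² + 1` and
`k = exp(∑_{n=0}^{∞} 2^{-(n+1)} · log(1 + yₙ^{-2}))`, the asymptotic complexity coefficients
`2ⁿ / log₂(yₙ)` converge to `L = log 2 / log k`, and `1.7015 < L < 1.7016`. -/
theorem asymptotic_complexity_coefficient (y : ℕ → ℕ)
    (h0 : y 0 = 1) (hrec : ∀ n, y (n + 1) = (y n) ^ 2 + 1)
    (k : ℝ)
    (hk : k = Real.exp (∑' n : ℕ, ((2 : ℝ) ^ (n + 1))⁻¹ * Real.log (1 + ((y n : ℝ) ^ 2)⁻¹))) :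
    Tendsto (fun n : ℕ => (2 : ℝ) ^ n / (Real.log (y n) / Real.log 2)) atTop
      (nhds (Real.log 2 / Real.log k)) ∧
    1.7015 < Real.log 2 / Real.log k ∧ Real.log 2 / Real.log k < 1.7016 := by
  have hY0 : (y 0 : ℝ) = 1 := by rw [h0, Nat.cast_one]
  have hYrec : ∀ n, (y (n + 1) : ℝ) = (y n : ℝ) ^ 2 + 1 := fun n => by rw [hrec]; push_cast; rfl
  have hlogk : log k = ∑' n, logCorrection (fun n => (y n : ℝ)) n := by
    rw [hk, log_exp]; rfl
  obtain ⟨hlo, hhi⟩ := tsum_logCorrection_mem_Ioo (y := fun n => (y n : ℝ)) hY0 hYrec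
  rw [← hlogk] at hlo hhi
  have hpos : 0 < log k := by linarith
  refine ⟨?_, ?_, ?_⟩
  · have h := tendsto_log_div_two_pow (y := fun n => (y n : ℝ)) hYrec (hY0 ▸ one_pos)
    rw [hY0, log_one, zero_add, ← hlogk] at h
    convert tendsto_const_nhds.div h hpos.ne' using 2 with n
    simp only [Pi.div_apply]
    field_simp
  · rw [lt_div_iff₀ hpos]; linarith [log_two_gt_d9]
  · rw [div_lt_iff₀ hpos]; linarith [log_two_lt_d9]
end
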